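/- Let A be a bounded distributive lattice and let ♦₋ : A → A satisfy ♦₋(a ⊓ b) = ♦₋a ⊔ ♦₋b for all a, b and ♦₋⊤ = ⊥ (a negative diamond operator). Order the prime filters of A by inclusion and define a relation R on them by U R V iff for all a, a ∉ V implies ♦₋a ∈ U. Then the map η sending a ∈ A to η(a) = {U : U is a prime filter of A and a ∈ U} is an injective map into the upsets of the inclusion-ordered poset of prime filters satisfying η(a ⊓ b) = η(a) ∩ η(b), η(a ⊔ b) = η(a) ∪ η(b), η(⊤) = the set of all prime filters, η(⊥) = ∅, and moreover η(♦₋a) = {U : there exists a prime filter V with U R V and a ∉ V} for all a ∈ A. -/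

import Mathlib

/-!
Every `a ≰ b` is separated by a prime filter (the prime filter theorem), which makes `η`
injective; the lattice equations are the defining properties of prime filters. For the
diamond: if `♦₋a ∈ U`, then `{b | ♦₋b ∉ U}` is a filter, because `♦₋` turns `⊓` into `⊔`
and `⊤` into `⊥` and `U` is prime. It does not contain `a`, so it extends to a prime
filter `V ∌ a`, and `U R V` holds by construction.
-/

/-- A prime filter of a bounded distributive lattice. -/
def IsPrimeFilter {A : Type*} [DistribLattice A] [BoundedOrder A] (F : Set A) : Prop :=
  (∀ a b : A, a ∈ F → a ≤ b → b ∈ F) ∧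
  (∀ a b : A, a ∈ F → b ∈ F → a ⊓ b ∈ F) ∧
  (⊤ : A) ∈ F ∧ (⊥ : A) ∉ F ∧
  (∀ a b : A, a ⊔ b ∈ F → a ∈ F ∨ b ∈ F)

section PrimeFilter

variable {A : Type*} [DistribLattice A] [BoundedOrder A]

namespace IsPrimeFilter

variable {F : Set A} {a b : A}

lemma mem_of_le (hF : IsPrimeFilter F) (ha : a ∈ F) (hab : a ≤ b) : b ∈ F :=
  hF.1 a b ha hab

lemma top_mem (hF : IsPrimeFilter F) : (⊤ : A) ∈ F := hF.2.2.1

lemma bot_notMem (hF : IsPrimeFilter F) : (⊥ : A) ∉ F := hF.2.2.2.1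

lemma inf_mem_iff (hF : IsPrimeFilter F) : a ⊓ b ∈ F ↔ a ∈ F ∧ b ∈ F :=
  ⟨fun h => ⟨hF.mem_of_le h inf_le_left, hF.mem_of_le h inf_le_right⟩,
    fun h => hF.2.1 a b h.1 h.2⟩

lemma sup_mem_iff (hF : IsPrimeFilter F) : a ⊔ b ∈ F ↔ a ∈ F ∨ b ∈ F :=
  ⟨hF.2.2.2.2 a b, fun h => h.elim (hF.mem_of_le · le_sup_left) (hF.mem_of_le · le_sup_right)⟩

end IsPrimeFilter

lemma Order.Ideal.IsPrime.isPrimeFilter_compl {J : Order.Ideal A} (hJ : J.IsPrime) :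
    IsPrimeFilter (J : Set A)ᶜ := by
  refine ⟨fun x y hx hxy hy => hx (J.lower hxy hy), fun x y hx hy hxy => ?_,
    hJ.top_notMem, fun h => h J.bot_mem, fun x y hxy => ?_⟩
  · exact (hJ.mem_or_mem hxy).elim hx hy
  · by_contra! h
    exact hxy (Order.Ideal.sup_mem (not_not.mp h.1) (not_not.mp h.2))

lemma Order.PFilter.exists_isPrimeFilter (F : Order.PFilter A) {a : A} (ha : a ∉ F) :
    ∃ V : Set A, IsPrimeFilter V ∧ (F : Set A) ⊆ V ∧ a ∉ V := by
  have hdisj : Disjoint (F : Set A) (Order.Ideal.principal a) :=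
    Set.disjoint_left.mpr fun x hx hxa => ha (F.mem_of_le (Order.Ideal.mem_principal.mp hxa) hx)
  obtain ⟨J, hJ, haJ, hFJ⟩ := DistribLattice.prime_ideal_of_disjoint_filter_ideal hdisj
  exact ⟨(J : Set A)ᶜ, hJ.isPrimeFilter_compl, hFJ.subset_compl_right,
    not_not.mpr (haJ Order.Ideal.mem_principal_self)⟩

lemma exists_isPrimeFilter_mem_notMem {a b : A} (hab : ¬a ≤ b) :
    ∃ V : Set A, IsPrimeFilter V ∧ a ∈ V ∧ b ∉ V := by
  obtain ⟨V, hV, haV, hbV⟩ := (Order.PFilter.principal a).exists_isPrimeFilter hab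
  exact ⟨V, hV, haV le_rfl, hbV⟩

lemma le_of_setOf_mem_subset {a b : A}
    (h : {U : {F : Set A // IsPrimeFilter F} | a ∈ U.val} ⊆ {U | b ∈ U.val}) : a ≤ b := by
  by_contra hab
  obtain ⟨V, hV, haV, hbV⟩ := exists_isPrimeFilter_mem_notMem hab
  exact hbV (h (a := ⟨V, hV⟩) haV)

end PrimeFilter

lemma antitone_of_map_inf {α β : Type*} [SemilatticeInf α] [SemilatticeSup β] {f : α → β}
    (hf : ∀ a b, f (a ⊓ b) = f a ⊔ f b) : Antitone f :=
  fun a b hab => by simpa [inf_eq_left.mpr hab] using (hf a b).ge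

section MapInf

variable {α β : Type*} [DistribLattice β] [BoundedOrder β]

lemma isPFilter_setOf_map_notMem [SemilatticeInf α] [OrderTop α] {f : α → β}
    (hf : ∀ a b, f (a ⊓ b) = f a ⊔ f b) (htop : f ⊤ = ⊥) {U : Set β}
    (hU : IsPrimeFilter U) : Order.IsPFilter {b | f b ∉ U} := by
  refine Order.IsPFilter.of_def ⟨⊤, by simpa [htop] using hU.bot_notMem⟩ ?_ ?_
  · intro x hx y hy
    refine ⟨x ⊓ y, ?_, inf_le_left, inf_le_right⟩
    change f (x ⊓ y) ∉ U
    rw [hf, hU.sup_mem_iff]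
    tauto
  · exact fun hxy hx hy => hx (hU.mem_of_le hy (antitone_of_map_inf hf hxy))

lemma exists_isPrimeFilter_of_map_mem [DistribLattice α] [BoundedOrder α] {f : α → β}
    (hf : ∀ a b, f (a ⊓ b) = f a ⊔ f b) (htop : f ⊤ = ⊥) {U : Set β}
    (hU : IsPrimeFilter U) {a : α} (ha : f a ∈ U) :
    ∃ V : Set α, IsPrimeFilter V ∧ (∀ b, b ∉ V → f b ∈ U) ∧ a ∉ V := by
  obtain ⟨V, hV, hsub, haV⟩ :=
    (isPFilter_setOf_map_notMem hf htop hU).toPFilter.exists_isPrimeFilter (a := a) (not_not.mpr ha)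
  exact ⟨V, hV, fun b hbV => not_not.mp fun hb => hbV (hsub hb), haV⟩

end MapInf

theorem stmt1 {A : Type*} [DistribLattice A] [BoundedOrder A]
    (diam : A → A)
    (hmeet : ∀ a b : A, diam (a ⊓ b) = diam a ⊔ diam b) (htop : diam ⊤ = ⊥)
    (R : {F : Set A // IsPrimeFilter F} → {F : Set A // IsPrimeFilter F} → Prop)
    (hR : ∀ U V, R U V ↔ ∀ a : A, a ∉ V.val → diam a ∈ U.val)
    (η : A → Set {F : Set A // IsPrimeFilter F})
    (hη : ∀ a : A, η a = {U | a ∈ U.val}) :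
    Function.Injective η ∧
    (∀ a : A, ∀ U V : {F : Set A // IsPrimeFilter F}, U ∈ η a → U.val ⊆ V.val → V ∈ η a) ∧
    (∀ a b : A, η (a ⊓ b) = η a ∩ η b) ∧
    (∀ a b : A, η (a ⊔ b) = η a ∪ η b) ∧
    η ⊤ = Set.univ ∧ η ⊥ = ∅ ∧
    (∀ a : A, η (diam a) = {U | ∃ V, R U V ∧ a ∉ V.val}) := by
  obtain rfl : η = fun a => {U | a ∈ U.val} := funext hη
  refine ⟨fun a b hab => (le_of_setOf_mem_subset hab.le).antisymm (le_of_setOf_mem_subset hab.ge),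
    fun a U V hU hUV => hUV hU, fun a b => Set.ext fun U => U.2.inf_mem_iff,
    fun a b => Set.ext fun U => U.2.sup_mem_iff, Set.eq_univ_of_forall fun U => U.2.top_mem,
    Set.eq_empty_of_forall_notMem fun U => U.2.bot_notMem, fun a => Set.ext fun U => ?_⟩
  refine ⟨fun hda => ?_, fun ⟨V, hUV, haV⟩ => (hR U V).mp hUV a haV⟩
  obtain ⟨V, hV, hVU, haV⟩ := exists_isPrimeFilter_of_map_mem hmeet htop U.2 hda
  exact ⟨⟨V, hV⟩, (hR _ _).mpr hVU, haV⟩
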